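/- arXiv:2005.13372 — 6 statements merged into one kernel-verified Lean document; each statement's English description precedes it below -/
import Mathlib

section
/- Let p be a prime and α ≥ 0. The number of subgroups of (ℤ/p^αℤ)² of order p^α equals (p^(α+1) − 1)/(p − 1). -/
/-!
A subgroup `S` of order `n` of `(ℤ/nℤ)²` is pinned down by its projection `A` to the first
factor and by `K = S ∩ (0 × ℤ/nℤ)`: `|A| |K| = n`, so `|K| = d` with `d ∣ n`, and as `ℤ/nℤ` is
cyclic, `A = ⟨d⟩` and `K = ⟨n/d⟩`. Then `S` is generated by `(0, n/d)` and any lift `(d, c)` of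
`d`, and `c` is determined modulo `n/d`. So these subgroups are counted by
`∑_{d ∣ n} n/d = σ(n)`, which for `n = p^α` is `1 + p + ⋯ + p^α`.
-/

open AddSubgroup ArithmeticFunction
open scoped ArithmeticFunction.sigma

theorem AddSubgroup.card_eq_card_map_fst_mul_card_comap_inr {A B : Type*} [AddGroup A]
    [AddGroup B] (S : AddSubgroup (A × B)) :
    Nat.card S =
      Nat.card (S.map (AddMonoidHom.fst A B)) * Nat.card (S.comap (AddMonoidHom.inr A B)) := by
  have hker : (AddMonoidHom.fst A B).ker ⊓ S =
      (S.comap (AddMonoidHom.inr A B)).map (AddMonoidHom.inr A B) := by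
    ext ⟨a, b⟩
    simp only [AddMonoidHom.mem_ker, mem_inf, mem_map, mem_comap, AddMonoidHom.inr_apply,
      Prod.mk.injEq, AddMonoidHom.coe_fst]
    grind
  rw [← card_mul_index ((AddMonoidHom.fst A B).ker.addSubgroupOf S), ← relIndex, relIndex_ker,
    ← card_map_of_injective (f := S.subtype) Subtype.val_injective, addSubgroupOf_map_subtype,
    hker, card_map_of_injective (Prod.mk_right_injective 0), mul_comm]

theorem AddSubgroup.eq_of_card_eq_of_isAddCyclic {G : Type*} [AddCommGroup G] [IsAddCyclic G]
    [Finite G] {H K : AddSubgroup G} (h : Nat.card H = Nat.card K) : H = K := by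
  suffices ∀ L : AddSubgroup G, L = (nsmulAddMonoidHom (α := G) (Nat.card L)).ker by
    rw [this H, this K, h]
  intro L
  refine eq_of_le_of_card_ge (fun x hx ↦ ?_) ?_
  · exact addOrderOf_dvd_iff_nsmul_eq_zero.mp (L.addOrderOf_dvd_natCard hx)
  · rw [IsAddCyclic.card_nsmulAddMonoidHom_ker, Nat.gcd_eq_right (card_addSubgroup_dvd_card L)]

namespace ZMod

variable {n d : ℕ}

theorem addOrderOf_natCast_of_dvd [NeZero n] (hd : d ∣ n) :
    addOrderOf (d : ZMod n) = n / d := by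
  rw [addOrderOf_coe _ (NeZero.ne n), Nat.gcd_eq_right hd]

theorem card_zmultiples_natCast_of_dvd [NeZero n] (hd : d ∣ n) :
    Nat.card (zmultiples (d : ZMod n)) = n / d := by
  rw [Nat.card_zmultiples, addOrderOf_natCast_of_dvd hd]

theorem intCast_mem_zmultiples_natCast_iff (hd : d ∣ n) {x : ℤ} :
    (x : ZMod n) ∈ zmultiples (d : ZMod n) ↔ (d : ℤ) ∣ x := by
  constructor
  · rintro ⟨k, hk⟩
    have hn : (n : ℤ) ∣ k * d - x := by
      rw [← intCast_zmod_eq_zero_iff_dvd]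
      push_cast
      rw [← hk]
      simp [zsmul_eq_mul]
    exact (dvd_sub_right (dvd_mul_left _ _)).mp ((Int.natCast_dvd_natCast.mpr hd).trans hn)
  · rintro ⟨k, rfl⟩
    exact ⟨k, by push_cast [zsmul_eq_mul]; ring⟩

end ZMod

/-- The image in `(ℤ/nℤ)²` of the lattice with Hermite normal form `[[d, c], [0, n / d]]`. -/
def hermiteSubgroup (n d c : ℕ) : AddSubgroup (ZMod n × ZMod n) :=
  closure {((d : ZMod n), (c : ZMod n)), (0, ((n / d : ℕ) : ZMod n))}

section hermiteSubgroup

variable {n d c : ℕ}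

theorem mk_mem_hermiteSubgroup : ((d : ZMod n), (c : ZMod n)) ∈ hermiteSubgroup n d c :=
  subset_closure (Set.mem_insert _ _)

theorem map_fst_hermiteSubgroup :
    (hermiteSubgroup n d c).map (AddMonoidHom.fst _ _) = zmultiples (d : ZMod n) := by
  rw [hermiteSubgroup, AddMonoidHom.map_closure, Set.image_pair, AddMonoidHom.coe_fst,
    Set.pair_comm, closure_insert_zero, zmultiples_eq_closure]

theorem comap_inr_hermiteSubgroup [NeZero n] (hd : d ∣ n) :
    (hermiteSubgroup n d c).comap (AddMonoidHom.inr _ _) = zmultiples ((n / d : ℕ) : ZMod n) := by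
  refine le_antisymm (fun y hy ↦ ?_) (zmultiples_le.mpr (subset_closure (by simp)))
  obtain ⟨a, b, hab⟩ := mem_closure_pair.mp hy
  have hfst : a • (d : ZMod n) = 0 := by simpa using congrArg Prod.fst hab
  have hsnd : a • (c : ZMod n) + b • ((n / d : ℕ) : ZMod n) = y := by
    simpa using congrArg Prod.snd hab
  obtain ⟨k, rfl⟩ : ((n / d : ℕ) : ℤ) ∣ a := by
    rwa [← ZMod.addOrderOf_natCast_of_dvd hd, addOrderOf_dvd_iff_zsmul_eq_zero]
  refine ⟨k * c + b, ?_⟩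
  rw [← hsnd]
  simp only [zsmul_eq_mul, Int.cast_add, Int.cast_mul, Int.cast_natCast]
  ring

theorem card_hermiteSubgroup [NeZero n] (hd : d ∣ n) : Nat.card (hermiteSubgroup n d c) = n := by
  rw [card_eq_card_map_fst_mul_card_comap_inr, map_fst_hermiteSubgroup,
    comap_inr_hermiteSubgroup hd, ZMod.card_zmultiples_natCast_of_dvd hd,
    ZMod.card_zmultiples_natCast_of_dvd (Nat.div_dvd_of_dvd hd),
    Nat.div_div_self hd (NeZero.ne n), Nat.div_mul_cancel hd]

theorem exists_hermiteSubgroup_eq_of_card_eq [NeZero n] {S : AddSubgroup (ZMod n × ZMod n)}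
    (hS : Nat.card S = n) : ∃ d ∈ n.divisors, ∃ c < n / d, hermiteSubgroup n d c = S := by
  set A := S.map (AddMonoidHom.fst _ _)
  set K := S.comap (AddMonoidHom.inr _ _)
  have hAK : Nat.card A * Nat.card K = n := by
    rw [← card_eq_card_map_fst_mul_card_comap_inr, hS]
  set d := Nat.card K
  have hd : d ∣ n := Dvd.intro_left _ hAK
  have hnd : n / d = Nat.card A := Nat.div_eq_of_eq_mul_left Nat.card_pos hAK.symm
  have hA : A = zmultiples (d : ZMod n) :=
    eq_of_card_eq_of_isAddCyclic (by rw [ZMod.card_zmultiples_natCast_of_dvd hd, hnd])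
  have hK : K = zmultiples ((n / d : ℕ) : ZMod n) := eq_of_card_eq_of_isAddCyclic (by
    rw [ZMod.card_zmultiples_natCast_of_dvd (Nat.div_dvd_of_dvd hd),
      Nat.div_div_self hd (NeZero.ne n)])
  obtain ⟨g, hgS, hg⟩ : (d : ZMod n) ∈ A := hA ▸ mem_zmultiples _
  set c := g.2.val % (n / d)
  have hc : (((c : ℤ) - g.2.val : ℤ) : ZMod n) ∈ K := by
    rw [hK, ZMod.intCast_mem_zmultiples_natCast_iff (Nat.div_dvd_of_dvd hd), ← neg_sub, dvd_neg]
    exact Nat.modEq_iff_dvd.mp (Nat.mod_modEq _ _)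
  have hgen : ((d : ZMod n), (c : ZMod n)) ∈ S := by
    convert add_mem hgS hc using 1
    ext
    · simp [← hg]
    · simp
  have hle : hermiteSubgroup n d c ≤ S := by
    refine (closure_le S).mpr (Set.insert_subset hgen (Set.singleton_subset_iff.mpr ?_))
    exact (hK ▸ mem_zmultiples _ : _ ∈ K)
  refine ⟨d, Nat.mem_divisors.mpr ⟨hd, NeZero.ne n⟩, c, Nat.mod_lt _ (hnd ▸ Nat.card_pos), ?_⟩
  exact eq_of_le_of_card_ge hle (by rw [hS, card_hermiteSubgroup hd])

theorem hermiteSubgroup_injOn [NeZero n] :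
    Set.InjOn (fun x : ℕ × ℕ ↦ hermiteSubgroup n x.1 x.2) {x | x.1 ∣ n ∧ x.2 < n / x.1} := by
  rintro ⟨d, c⟩ ⟨hd : d ∣ n, hc : c < n / d⟩ ⟨d', c'⟩ ⟨hd' : d' ∣ n, hc' : c' < n / d'⟩
    (h : hermiteSubgroup n d c = hermiteSubgroup n d' c')
  obtain rfl : d = d' := by
    have := congrArg (fun S ↦ Nat.card (S.map (AddMonoidHom.fst _ _))) h
    simp only [map_fst_hermiteSubgroup, ZMod.card_zmultiples_natCast_of_dvd hd,
      ZMod.card_zmultiples_natCast_of_dvd hd'] at this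
    rw [← Nat.div_div_self hd (NeZero.ne n), this, Nat.div_div_self hd' (NeZero.ne n)]
  have hmem : (((c : ℤ) - c' : ℤ) : ZMod n) ∈
      (hermiteSubgroup n d c').comap (AddMonoidHom.inr _ _) := by
    rw [mem_comap]
    convert sub_mem (h ▸ mk_mem_hermiteSubgroup) (mk_mem_hermiteSubgroup (c := c')) using 1
    ext <;> simp
  rw [comap_inr_hermiteSubgroup hd,
    ZMod.intCast_mem_zmultiples_natCast_iff (Nat.div_dvd_of_dvd hd)] at hmem
  rw [Nat.ModEq.eq_of_lt_of_lt (Nat.modEq_iff_dvd.mpr hmem) hc' hc]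

end hermiteSubgroup

theorem card_addSubgroup_zmod_prod_of_card_eq (n : ℕ) [NeZero n] :
    Nat.card {S : AddSubgroup (ZMod n × ZMod n) // Nat.card S = n} = σ 1 n := by
  let f (x : Σ d : n.divisors, Fin (n / d)) :
      {S : AddSubgroup (ZMod n × ZMod n) // Nat.card S = n} :=
    ⟨hermiteSubgroup n x.1 x.2, card_hermiteSubgroup (Nat.dvd_of_mem_divisors x.1.2)⟩
  have hf : f.Bijective := by
    refine ⟨fun ⟨⟨d, hd⟩, ⟨c, hc⟩⟩ ⟨⟨d', hd'⟩, ⟨c', hc'⟩⟩ h ↦ ?_, fun ⟨S, hS⟩ ↦ ?_⟩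
    · obtain ⟨rfl, rfl⟩ := Prod.mk.inj <| hermiteSubgroup_injOn
        ⟨Nat.dvd_of_mem_divisors hd, hc⟩ ⟨Nat.dvd_of_mem_divisors hd', hc'⟩ (congrArg Subtype.val h)
      rfl
    · obtain ⟨d, hd, c, hc, rfl⟩ := exists_hermiteSubgroup_eq_of_card_eq hS
      exact ⟨⟨⟨d, hd⟩, ⟨c, hc⟩⟩, rfl⟩
  rw [← Nat.card_eq_of_bijective f hf, Nat.card_sigma, sigma_one_apply, ← Nat.sum_div_divisors]
  simp only [Nat.card_eq_fintype_card, Fintype.card_fin]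
  exact Finset.sum_coe_sort n.divisors (fun d ↦ n / d)

/-- The number of subgroups of `(ℤ/p^αℤ)²` of order `p^α` equals `(p^(α+1) - 1)/(p - 1)`. -/
theorem count_subgroups_of_order_p_pow (p : ℕ) (hp : p.Prime) (α : ℕ) :
    Nat.card {S : AddSubgroup (ZMod (p ^ α) × ZMod (p ^ α)) // Nat.card S = p ^ α} =
      (p ^ (α + 1) - 1) / (p - 1) := by
  have : NeZero (p ^ α) := ⟨pow_ne_zero _ hp.ne_zero⟩
  rw [card_addSubgroup_zmod_prod_of_card_eq, sigma_one_apply_prime_pow hp,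
    Nat.geomSum_eq hp.two_le]
end

section
/- Let p be a prime, α ≥ 0, and let M be the automorphism of (ℤ/p^αℤ)² given by the matrix [[0,−1],[1,−1]]. A subgroup S of (ℤ/p^αℤ)² of order p^α of the form S = ⟨(p^i, x), (0, p^(α−i))⟩ with 0 ≤ i ≤ α and 0 ≤ x < p^(α−i) satisfies M·S = S if and only if 2i ≤ α and x = p^i·y for some integer y with p^(α−2i) ∣ y² − y + 1. -/
/-!
Since `M³ = 1`, `M S = S` as soon as `M` maps both generators into `S`. An element `(E, F)`
lies in `S` iff `E ≡ p^i e (mod p^α)` and `F ≡ e x (mod p^(α-i))` for some integer `e`.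
For `M (0, p^(α-i)) = (-p^(α-i), -p^(α-i))` this forces `p^i ∣ p^(α-i)`, i.e. `2i ≤ α`; for
`M (p^i, x) = (-x, p^i - x)` it says `x ≡ p^i y` with `p^(α-i) ∣ p^i (y² - y + 1)`.
-/

/-- The endomorphism of `(ℤ/nℤ)²` given by the matrix `[[0,-1],[1,-1]]`,
i.e. `(a,b) ↦ (-b, a-b)`. -/
def Mxi (n : ℕ) : (ZMod n × ZMod n) →+ (ZMod n × ZMod n) :=
  AddMonoidHom.mk' (fun z => (-z.2, z.1 - z.2)) (by
    intro a b
    ext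
    · simp
      ring
    · simp
      ring)

theorem AddSubgroup.map_eq_self_iff_of_comp_comp_eq_id {G : Type*} [AddGroup G] {f : G →+ G}
    (hf : (f.comp f).comp f = AddMonoidHom.id G) (S : AddSubgroup G) :
    S.map f = S ↔ S.map f ≤ S := by
  refine ⟨fun h => h.le, fun hle => hle.antisymm ?_⟩
  calc S = ((S.map f).map f).map f := by rw [map_map, map_map, hf, map_id]
    _ ≤ (S.map f).map f := map_mono (map_mono hle)
    _ ≤ S.map f := map_mono hle

theorem AddSubgroup.map_closure_le_closure_iff {G : Type*} [AddGroup G] (f : G →+ G)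
    (s : Set G) : (closure s).map f ≤ closure s ↔ ∀ u ∈ s, f u ∈ closure s := by
  rw [AddMonoidHom.map_closure, closure_le, Set.image_subset_iff]
  rfl

theorem Mxi_comp_Mxi_comp_Mxi (n : ℕ) :
    ((Mxi n).comp (Mxi n)).comp (Mxi n) = AddMonoidHom.id _ := by
  ext ⟨a, b⟩ <;>
    simp only [Mxi, AddMonoidHom.coe_comp, AddMonoidHom.mk'_apply, Function.comp_apply,
      AddMonoidHom.id_apply] <;>
    ring

theorem mk_intCast_mem_closure_pair_iff {n : ℕ} {m N : ℤ} (hn : (n : ℤ) = m * N) (x E F : ℤ) :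
    ((E : ZMod n), (F : ZMod n)) ∈
        AddSubgroup.closure {((m : ZMod n), (x : ZMod n)), (0, (N : ZMod n))} ↔
      ∃ e : ℤ, E ≡ m * e [ZMOD n] ∧ e * x ≡ F [ZMOD N] := by
  simp only [AddSubgroup.mem_closure_pair, Prod.smul_mk, Prod.mk_add_mk, Prod.ext_iff,
    zsmul_eq_mul, smul_zero, add_zero, ← Int.cast_mul, ← Int.cast_add,
    ZMod.intCast_eq_intCast_iff]
  constructor
  · rintro ⟨a, b, ham, habx⟩
    refine ⟨a, (mul_comm m a ▸ ham).symm, ?_⟩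
    have hNn : N ∣ n := ⟨m, by rw [hn, mul_comm]⟩
    exact (Int.modEq_iff_dvd.mpr ⟨b, by ring⟩).trans (habx.of_dvd hNn)
  · rintro ⟨e, hE, hF⟩
    obtain ⟨t, ht⟩ := Int.modEq_iff_dvd.mp hF
    refine ⟨e, t, (mul_comm m e ▸ hE).symm, ?_⟩
    rw [mul_comm t, ← ht, add_sub_cancel]

theorem Int.neg_mul_modEq_sub_iff_dvd {m N x y : ℤ} (hx : x ≡ m * y [ZMOD N]) :
    -y * x ≡ m - x [ZMOD N] ↔ N ∣ m * (y ^ 2 - y + 1) := by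
  rw [Int.modEq_iff_dvd,
    show m - x - -y * x = m * (y ^ 2 - y + 1) + (1 - y) * (m * y - x) by ring]
  exact dvd_add_left (dvd_mul_of_dvd_right (Int.modEq_iff_dvd.mp hx))

theorem Int.exists_neg_modEq_and_modEq_iff {n m N x : ℤ} (hN : N ∣ n) :
    (∃ e : ℤ, -x ≡ m * e [ZMOD n] ∧ e * x ≡ m - x [ZMOD N]) ↔
      ∃ y : ℤ, x ≡ m * y [ZMOD n] ∧ N ∣ m * (y ^ 2 - y + 1) := by
  constructor
  · rintro ⟨e, hx, he⟩
    have hx' : x ≡ m * -e [ZMOD n] := by simpa using hx.neg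
    exact ⟨-e, hx', (neg_mul_modEq_sub_iff_dvd (hx'.of_dvd hN)).mp (by simpa using he)⟩
  · rintro ⟨y, hx, hy⟩
    exact ⟨-y, by simpa using hx.neg, (neg_mul_modEq_sub_iff_dvd (hx.of_dvd hN)).mpr hy⟩

theorem prime_pow_modEq_conditions_iff {p : ℕ} (hp : p.Prime) {α i : ℕ} (hi : i ≤ α) (x : ℤ) :
    ((∃ e : ℤ, -x ≡ p ^ i * e [ZMOD p ^ α] ∧ e * x ≡ p ^ i - x [ZMOD p ^ (α - i)]) ∧
      ∃ e : ℤ, -(p : ℤ) ^ (α - i) ≡ p ^ i * e [ZMOD p ^ α] ∧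
        e * x ≡ -(p : ℤ) ^ (α - i) [ZMOD p ^ (α - i)]) ↔
    2 * i ≤ α ∧ ∃ y : ℤ, x ≡ p ^ i * y [ZMOD p ^ α] ∧ (p : ℤ) ^ (α - 2 * i) ∣ y ^ 2 - y + 1 := by
  have hp' := Nat.prime_iff_prime_int.mp hp
  set m : ℤ := p ^ i
  set K : ℤ := p ^ (α - 2 * i)
  have hα : (p : ℤ) ^ α = m * p ^ (α - i) := by rw [← pow_add, Nat.add_sub_cancel' hi]
  have hαi : 2 * i ≤ α → (p : ℤ) ^ (α - i) = m * K := fun h2i => by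
    rw [← pow_add]; congr 1; omega
  rw [Int.exists_neg_modEq_and_modEq_iff (hα ▸ dvd_mul_left _ _)]
  constructor
  · rintro ⟨⟨y, hxy, hy⟩, e, hN, -⟩
    have h2i : 2 * i ≤ α := by
      have hdvd : m ∣ -(p : ℤ) ^ (α - i) :=
        (hN.of_dvd (hα ▸ dvd_mul_right _ _)).dvd_iff.mpr (dvd_mul_right _ _)
      rw [dvd_neg, pow_dvd_pow_iff hp'.ne_zero hp'.not_isUnit] at hdvd
      omega
    rw [hαi h2i] at hy
    exact ⟨h2i, y, hxy, (mul_dvd_mul_iff_left (pow_ne_zero _ hp'.ne_zero)).mp hy⟩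
  · rintro ⟨h2i, y, hxy, hK⟩
    have hxN := Int.modEq_iff_dvd.mp (hxy.of_dvd (hα ▸ dvd_mul_left _ _))
    rw [hαi h2i] at hxN ⊢
    refine ⟨⟨y, hxy, mul_dvd_mul_left _ hK⟩, -K, by rw [mul_neg], Int.modEq_iff_dvd.mpr ?_⟩
    rw [show -(m * K) - -K * x = m * K * (y - 1) - K * (m * y - x) by ring]
    exact dvd_sub (dvd_mul_right _ _) (hxN.mul_left K)

theorem Mxi_stable_iff_general (p : ℕ) (hp : p.Prime) (α i x : ℕ) (hi : i ≤ α)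
    (S : AddSubgroup (ZMod (p ^ α) × ZMod (p ^ α)))
    (hS : S = AddSubgroup.closure
      {(((p : ZMod (p ^ α)) ^ i, (x : ZMod (p ^ α)))),
        ((0 : ZMod (p ^ α)), (p : ZMod (p ^ α)) ^ (α - i))}) :
    S.map (Mxi (p ^ α)) = S ↔
      2 * i ≤ α ∧ ∃ y : ℤ,
        (x : ZMod (p ^ α)) = (p : ZMod (p ^ α)) ^ i * (y : ZMod (p ^ α)) ∧
        (p : ℤ) ^ (α - 2 * i) ∣ y ^ 2 - y + 1 := by
  have hα : ((p ^ α : ℕ) : ℤ) = p ^ i * p ^ (α - i) := by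
    push_cast; rw [← pow_add, Nat.add_sub_cancel' hi]
  have hS' : S = AddSubgroup.closure
      {((((p : ℤ) ^ i : ℤ) : ZMod (p ^ α)), ((x : ℤ) : ZMod (p ^ α))),
        (0, (((p : ℤ) ^ (α - i) : ℤ) : ZMod (p ^ α)))} := by
    rw [hS]; push_cast; rfl
  rw [AddSubgroup.map_eq_self_iff_of_comp_comp_eq_id (Mxi_comp_Mxi_comp_Mxi _), hS',
    AddSubgroup.map_closure_le_closure_iff]
  simp only [Set.forall_mem_insert, Set.mem_singleton_iff, forall_eq, Mxi,
    AddMonoidHom.mk'_apply, zero_sub, ← Int.cast_neg, ← Int.cast_sub]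
  rw [mk_intCast_mem_closure_pair_iff hα, mk_intCast_mem_closure_pair_iff hα]
  push_cast
  rw [prime_pow_modEq_conditions_iff hp hi]
  refine and_congr_right fun _ => exists_congr fun y => and_congr_left fun _ => ?_
  simpa using (ZMod.intCast_eq_intCast_iff x (p ^ i * y) (p ^ α)).symm

/-- A subgroup `S = ⟨(p^i, x), (0, p^(α-i))⟩` of `(ℤ/p^αℤ)²` (with `0 ≤ i ≤ α`,
`0 ≤ x < p^(α-i)`) is stable under `(a,b) ↦ (-b, a-b)` if and only if `2i ≤ α` and
`x ≡ p^i y` for some integer `y` with `p^(α-2i) ∣ y² - y + 1`. -/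
theorem Mxi_stable_iff (p : ℕ) (hp : p.Prime) (α i x : ℕ) (hi : i ≤ α)
    (hx : x < p ^ (α - i)) (S : AddSubgroup (ZMod (p ^ α) × ZMod (p ^ α)))
    (hS : S = AddSubgroup.closure
      {(((p : ZMod (p ^ α)) ^ i, (x : ZMod (p ^ α)))),
        ((0 : ZMod (p ^ α)), (p : ZMod (p ^ α)) ^ (α - i))}) :
    S.map (Mxi (p ^ α)) = S ↔
      2 * i ≤ α ∧ ∃ y : ℤ,
        (x : ZMod (p ^ α)) = (p : ZMod (p ^ α)) ^ i * (y : ZMod (p ^ α)) ∧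
        (p : ℤ) ^ (α - 2 * i) ∣ y ^ 2 - y + 1 :=
  Mxi_stable_iff_general p hp α i x hi S hS
end

section
/- Let p be a prime, α ≥ 0, and let N be the automorphism of (ℤ/p^αℤ)² given by N(a,b) = (−b, a). A subgroup S of (ℤ/p^αℤ)² of order p^α of the form S = ⟨(p^i, x), (0, p^(α−i))⟩ with 0 ≤ i ≤ α and 0 ≤ x < p^(α−i) satisfies N·S = S if and only if 2i ≤ α and x = p^i·y for some integer y with p^(α−2i) ∣ y² + 1. -/
/-!
Since `N⁴ = 1`, the subgroup `S` is `N`-stable as soon as `N` maps both generators into `S`.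
An integer pair `(U, V)` lies in `S` iff `U ≡ p^i u (mod p^α)` and `V ≡ u x (mod p^(α-i))` for
some `u`. For `N(0, p^(α-i)) = (-p^(α-i), 0)` this forces `p^i ∣ p^(α-i)`, i.e. `2i ≤ α`. For
`N(p^i, x) = (-x, p^i)` it says `x ≡ p^i y (mod p^α)` with `y = -u`, and then
`p^i ≡ -y x ≡ -p^i y² (mod p^(α-i))`, i.e. `p^(α-2i) ∣ y² + 1`.
-/

/-- The endomorphism of `(ℤ/nℤ)²` given by the matrix `[[0,-1],[1,0]]`,
i.e. `(a,b) ↦ (-b, a)`. -/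
def Nxi (n : ℕ) : (ZMod n × ZMod n) →+ (ZMod n × ZMod n) :=
  AddMonoidHom.mk' (fun z => (-z.2, z.1)) (by
    intro a b
    ext
    · simp
      ring
    · simp)

theorem AddSubgroup.map_eq_self_of_map_le {G : Type*} [AddGroup G] {f : G →+ G} {n : ℕ}
    (hn : 0 < n) (hf : ∀ z, f^[n] z = z) {H : AddSubgroup G} (h : H.map f ≤ H) :
    H.map f = H := by
  obtain ⟨m, rfl⟩ := Nat.exists_eq_add_one.mpr hn
  have hmaps : Set.MapsTo f H H := fun z hz => h ⟨z, hz, rfl⟩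
  refine h.antisymm fun z hz => ⟨f^[m] z, hmaps.iterate m hz, ?_⟩
  rw [← Function.iterate_succ_apply' f m z]
  exact hf z

theorem AddSubgroup.map_closure_eq_self_iff {G : Type*} [AddGroup G] {f : G →+ G} {n : ℕ}
    (hn : 0 < n) (hf : ∀ z, f^[n] z = z) (s : Set G) :
    (closure s).map f = closure s ↔ ∀ g ∈ s, f g ∈ closure s := by
  refine ⟨fun h g hg => h ▸ mem_map_of_mem f (subset_closure hg), fun h => ?_⟩
  exact map_eq_self_of_map_le hn hf ((map_le_iff_le_comap).2 ((closure_le _).2 h))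

theorem Nxi_iterate_four (n : ℕ) (z : ZMod n × ZMod n) : (Nxi n)^[4] z = z := by
  simp [Nxi]

theorem ZMod.mk_intCast_mem_closure_pair_iff {n : ℕ} {c x e : ℤ} (he : e ∣ n) (U V : ℤ) :
    ((U : ZMod n), (V : ZMod n)) ∈
        AddSubgroup.closure {((c : ZMod n), (x : ZMod n)), (0, (e : ZMod n))} ↔
      ∃ u : ℤ, (n : ℤ) ∣ U - c * u ∧ e ∣ V - u * x := by
  simp only [AddSubgroup.mem_closure_pair, Prod.smul_mk, smul_zero, Prod.mk_add_mk, add_zero,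
    Prod.mk.injEq, zsmul_eq_mul, ← Int.cast_mul, ← Int.cast_add, ZMod.intCast_eq_intCast_iff_dvd_sub]
  constructor
  · rintro ⟨u, b, hU, hV⟩
    refine ⟨u, by rwa [mul_comm], ?_⟩
    simpa [sub_add_eq_sub_sub] using dvd_add (he.trans hV) (dvd_mul_left e b)
  · rintro ⟨u, hU, k, hk⟩
    refine ⟨u, k, by rwa [mul_comm], ?_⟩
    rw [show V - (u * x + k * e) = 0 by linear_combination hk]
    exact dvd_zero _

section Divisibility

variable {q : ℤ} {α i : ℕ}

theorem two_mul_le_of_pow_dvd_neg_pow_sub (hq : Prime q) (hi : i ≤ α) {u : ℤ}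
    (h : q ^ α ∣ -q ^ (α - i) - q ^ i * u) : 2 * i ≤ α := by
  have hdvd : q ^ i ∣ q ^ (α - i) := by
    simpa using dvd_add ((pow_dvd_pow q hi).trans h) (dvd_mul_right (q ^ i) u)
  have := (pow_dvd_pow_iff hq.ne_zero hq.not_isUnit).1 hdvd
  omega

theorem pow_dvd_sq_add_one_of_dvd (hq : q ≠ 0) (hi : 2 * i ≤ α) {x u : ℤ}
    (h₁ : q ^ α ∣ -x - q ^ i * u) (h₂ : q ^ (α - i) ∣ q ^ i - u * x) :
    q ^ (α - 2 * i) ∣ u ^ 2 + 1 := by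
  obtain ⟨d, hd⟩ := h₁
  have hα : q ^ α = q ^ (α - i) * q ^ i := by rw [← pow_add]; congr 1; omega
  have hαi : q ^ (α - i) = q ^ i * q ^ (α - 2 * i) := by rw [← pow_add]; congr 1; omega
  have hdvd : q ^ (α - i) ∣ q ^ i * (u ^ 2 + 1) := by
    rw [show q ^ i * (u ^ 2 + 1) = (q ^ i - u * x) - q ^ (α - i) * (q ^ i * u * d) by
      linear_combination (-u) * hd - u * d * hα]
    exact dvd_sub h₂ (dvd_mul_right _ _)
  rwa [hαi, mul_dvd_mul_iff_left (pow_ne_zero i hq)] at hdvd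

/-- The two conjuncts on the left say, via `ZMod.mk_intCast_mem_closure_pair_iff`, that
`N(q^i, x) = (-x, q^i)` and `N(0, q^(α-i)) = (-q^(α-i), 0)` lie in `⟨(q^i, x), (0, q^(α-i))⟩`. -/
theorem rotated_generators_mem_iff (hq : Prime q) (hi : i ≤ α) (x : ℤ) :
    ((∃ u, q ^ α ∣ -x - q ^ i * u ∧ q ^ (α - i) ∣ q ^ i - u * x) ∧
        ∃ u, q ^ α ∣ -q ^ (α - i) - q ^ i * u ∧ q ^ (α - i) ∣ 0 - u * x) ↔
      2 * i ≤ α ∧ ∃ y, q ^ α ∣ q ^ i * y - x ∧ q ^ (α - 2 * i) ∣ y ^ 2 + 1 := by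
  constructor
  · rintro ⟨⟨u, h₁, h₂⟩, v, h₃, -⟩
    have h2i := two_mul_le_of_pow_dvd_neg_pow_sub hq hi h₃
    refine ⟨h2i, -u, by simpa [sub_eq_add_neg, add_comm] using h₁, ?_⟩
    simpa using pow_dvd_sq_add_one_of_dvd hq.ne_zero h2i h₁ h₂
  · rintro ⟨h2i, y, ⟨d, hd⟩, k, hk⟩
    have hα : q ^ α = q ^ (α - i) * q ^ i := by rw [← pow_add]; congr 1; omega
    have hαi : q ^ (α - i) = q ^ i * q ^ (α - 2 * i) := by rw [← pow_add]; congr 1; omega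
    refine ⟨⟨-y, ⟨d, by linear_combination hd⟩, k - y * q ^ i * d, ?_⟩,
      -q ^ (α - 2 * i), ⟨0, by linear_combination -hαi⟩, y - q ^ (α - 2 * i) * q ^ i * d, ?_⟩
    · linear_combination (-y) * hd + q ^ i * hk - k * hαi - y * d * hα
    · linear_combination -q ^ (α - 2 * i) * hd - y * hαi - q ^ (α - 2 * i) * d * hα

end Divisibility

theorem Nxi_stable_iff_general (p : ℕ) (hp : p.Prime) (α i x : ℕ) (hi : i ≤ α)
    (S : AddSubgroup (ZMod (p ^ α) × ZMod (p ^ α)))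
    (hS : S = AddSubgroup.closure
      {(((p : ZMod (p ^ α)) ^ i, (x : ZMod (p ^ α)))),
        ((0 : ZMod (p ^ α)), (p : ZMod (p ^ α)) ^ (α - i))}) :
    S.map (Nxi (p ^ α)) = S ↔
      2 * i ≤ α ∧ ∃ y : ℤ,
        (x : ZMod (p ^ α)) = (p : ZMod (p ^ α)) ^ i * (y : ZMod (p ^ α)) ∧
        (p : ℤ) ^ (α - 2 * i) ∣ y ^ 2 + 1 := by
  have hgens : S = AddSubgroup.closure {((((p : ℤ) ^ i : ℤ) : ZMod (p ^ α)), ((x : ℤ) : ZMod (p ^ α))),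
      (0, (((p : ℤ) ^ (α - i) : ℤ) : ZMod (p ^ α)))} := by
    rw [hS]; push_cast; rfl
  have hN₁ : Nxi (p ^ α) ((((p : ℤ) ^ i : ℤ) : ZMod (p ^ α)), ((x : ℤ) : ZMod (p ^ α))) =
      (((-x : ℤ) : ZMod (p ^ α)), (((p : ℤ) ^ i : ℤ) : ZMod (p ^ α))) := by simp [Nxi]
  have hN₂ : Nxi (p ^ α) (0, (((p : ℤ) ^ (α - i) : ℤ) : ZMod (p ^ α))) =
      (((-(p : ℤ) ^ (α - i) : ℤ) : ZMod (p ^ α)), ((0 : ℤ) : ZMod (p ^ α))) := by simp [Nxi]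
  have he : (p : ℤ) ^ (α - i) ∣ ((p ^ α : ℕ) : ℤ) := by
    push_cast; exact pow_dvd_pow _ (Nat.sub_le α i)
  rw [hgens, AddSubgroup.map_closure_eq_self_iff four_pos (Nxi_iterate_four _)]
  simp only [Set.forall_mem_insert, Set.mem_singleton_iff, forall_eq]
  rw [hN₁, hN₂, ZMod.mk_intCast_mem_closure_pair_iff he, ZMod.mk_intCast_mem_closure_pair_iff he]
  simp only [← Int.cast_natCast (R := ZMod (p ^ α)) x, ← Int.cast_natCast (R := ZMod (p ^ α)) p,
    ← Int.cast_pow, ← Int.cast_mul, ZMod.intCast_eq_intCast_iff_dvd_sub, Nat.cast_pow]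
  exact rotated_generators_mem_iff (Nat.prime_iff_prime_int.mp hp) hi x

/-- A subgroup `S = ⟨(p^i, x), (0, p^(α-i))⟩` of `(ℤ/p^αℤ)²` (with `0 ≤ i ≤ α`,
`0 ≤ x < p^(α-i)`) is stable under `(a,b) ↦ (-b, a)` if and only if `2i ≤ α` and
`x ≡ p^i y` for some integer `y` with `p^(α-2i) ∣ y² + 1`. -/
theorem Nxi_stable_iff (p : ℕ) (hp : p.Prime) (α i x : ℕ) (hi : i ≤ α)
    (hx : x < p ^ (α - i)) (S : AddSubgroup (ZMod (p ^ α) × ZMod (p ^ α)))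
    (hS : S = AddSubgroup.closure
      {(((p : ZMod (p ^ α)) ^ i, (x : ZMod (p ^ α)))),
        ((0 : ZMod (p ^ α)), (p : ZMod (p ^ α)) ^ (α - i))}) :
    S.map (Nxi (p ^ α)) = S ↔
      2 * i ≤ α ∧ ∃ y : ℤ,
        (x : ZMod (p ^ α)) = (p : ZMod (p ^ α)) ^ i * (y : ZMod (p ^ α)) ∧
        (p : ℤ) ^ (α - 2 * i) ∣ y ^ 2 + 1 :=
  Nxi_stable_iff_general p hp α i x hi S hS
end

section
/- Let p be a prime with p ≡ 2 (mod 3), α ≥ 1, and let M be the automorphism of (ℤ/p^αℤ)² given by M(a,b) = (−b, a−b). Then the number of M-stable subgroups of (ℤ/p^αℤ)² of order p^α is 1 if α is even and 0 if α is odd. -/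
open AddSubgroup

theorem ZMod.eq_zero_of_sq_sub_mul_add_sq_eq_zero {p : ℕ} [Fact p.Prime] (hp3 : p % 3 = 2)
    {a b : ZMod p} (h : a ^ 2 - a * b + b ^ 2 = 0) : a = 0 ∧ b = 0 := by
  suffices hb : b = 0 by
    subst hb
    exact ⟨pow_eq_zero_iff two_ne_zero |>.mp (by simpa using h), rfl⟩
  by_contra hb
  have hζ3 : (-a / b) ^ 3 = 1 := by
    rw [div_pow, div_eq_one_iff_eq (pow_ne_zero 3 hb)]
    linear_combination -(a + b) * h
  have hζ1 : -a / b ≠ 1 := by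
    intro h1
    rw [div_eq_one_iff_eq hb] at h1
    have h3 : ((3 : ℕ) : ZMod p) = 0 := by
      have : 3 * b ^ 2 = 0 := by linear_combination h + (a - 2 * b) * h1
      simpa [hb] using this
    have := (Nat.prime_dvd_prime_iff_eq Fact.out Nat.prime_three).mp
      ((ZMod.natCast_eq_zero_iff 3 p).mp h3)
    omega
  have hdvd : 3 ∣ p - 1 := orderOf_eq_prime hζ3 hζ1 ▸
    ZMod.orderOf_dvd_card_sub_one (by rintro h0; simp [h0] at hζ3)
  have := (Fact.out : p.Prime).two_le
  omega

section PrimePower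

variable {p α : ℕ}

theorem ZMod.castHom_eq_zero_iff_dvd (hα : α ≠ 0) (x : ZMod (p ^ α)) :
    ZMod.castHom (dvd_pow_self p hα) (ZMod p) x = 0 ↔ (p : ZMod (p ^ α)) ∣ x := by
  constructor
  · obtain ⟨k, rfl⟩ := ZMod.intCast_surjective x
    rw [map_intCast, ZMod.intCast_zmod_eq_zero_iff_dvd]
    rintro ⟨m, rfl⟩
    exact ⟨m, by push_cast; rfl⟩
  · rintro ⟨y, rfl⟩
    rw [map_mul, map_natCast, ZMod.natCast_self, zero_mul]

theorem ZMod.isUnit_iff_castHom_ne_zero (hp : p.Prime) (hα : α ≠ 0) (x : ZMod (p ^ α)) :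
    IsUnit x ↔ ZMod.castHom (dvd_pow_self p hα) (ZMod p) x ≠ 0 := by
  have : NeZero (p ^ α) := ⟨pow_ne_zero _ hp.ne_zero⟩
  rw [← ZMod.natCast_zmod_val x, ZMod.isUnit_natCast_iff_not_dvd_pow hp (Nat.pos_of_ne_zero hα),
    map_natCast, Ne, ZMod.natCast_eq_zero_iff]

theorem ZMod.addOrderOf_prime_pow (hp : p.Prime) {k : ℕ} (hk : k ≤ α) :
    addOrderOf ((p : ZMod (p ^ α)) ^ k) = p ^ (α - k) := by
  rw [← Nat.cast_pow, ZMod.addOrderOf_coe _ (pow_ne_zero _ hp.ne_zero),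
    Nat.gcd_eq_right (Nat.pow_dvd_pow p hk), Nat.pow_div hk hp.pos]

end PrimePower

section Plane

variable {n : ℕ}

theorem ZMod.mem_zmultiples_iff_dvd {c x : ZMod n} : x ∈ zmultiples c ↔ c ∣ x := by
  rw [mem_zmultiples_iff]
  constructor
  · rintro ⟨k, rfl⟩
    exact ⟨k, by rw [zsmul_eq_mul, mul_comm]⟩
  · rintro ⟨y, rfl⟩
    obtain ⟨k, rfl⟩ := ZMod.intCast_surjective y
    exact ⟨k, by rw [zsmul_eq_mul, mul_comm]⟩

def dvdSubgroup (c : ZMod n) : AddSubgroup (ZMod n × ZMod n) :=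
  (zmultiples c).prod (zmultiples c)

theorem mem_dvdSubgroup {c : ZMod n} {z : ZMod n × ZMod n} :
    z ∈ dvdSubgroup c ↔ c ∣ z.1 ∧ c ∣ z.2 := by
  simp only [dvdSubgroup, mem_prod, ZMod.mem_zmultiples_iff_dvd]

theorem mem_dvdSubgroup_iff_exists_smul {c : ZMod n} {z : ZMod n × ZMod n} :
    z ∈ dvdSubgroup c ↔ ∃ w, z = c • w := by
  rw [mem_dvdSubgroup]
  constructor
  · rintro ⟨⟨x, hx⟩, ⟨y, hy⟩⟩
    exact ⟨(x, y), Prod.ext hx hy⟩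
  · rintro ⟨w, rfl⟩
    exact ⟨dvd_mul_right c w.1, dvd_mul_right c w.2⟩

theorem dvdSubgroup_zero : dvdSubgroup (0 : ZMod n) = ⊥ := by
  ext z
  simp only [mem_dvdSubgroup, zero_dvd_iff, mem_bot, Prod.ext_iff, Prod.fst_zero, Prod.snd_zero]

theorem card_dvdSubgroup (c : ZMod n) : Nat.card (dvdSubgroup c) = addOrderOf c ^ 2 := by
  rw [dvdSubgroup, Nat.card_congr (prodEquiv _ _).toEquiv, Nat.card_prod, Nat.card_zmultiples, sq]

theorem Mxi_apply (z : ZMod n × ZMod n) : Mxi n z = (-z.2, z.1 - z.2) := rfl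

theorem Mxi_Mxi_Mxi (z : ZMod n × ZMod n) : Mxi n (Mxi n (Mxi n z)) = z := by
  simp only [Mxi_apply]
  ext <;> ring

theorem map_Mxi_eq_of_forall_mem {S : AddSubgroup (ZMod n × ZMod n)}
    (hS : ∀ z ∈ S, Mxi n z ∈ S) : S.map (Mxi n) = S := by
  refine le_antisymm (map_le_iff_le_comap.mpr hS) fun z hz ↦ ?_
  exact ⟨Mxi n (Mxi n z), hS _ (hS z hz), Mxi_Mxi_Mxi z⟩

theorem Mxi_mem_dvdSubgroup {c : ZMod n} {z : ZMod n × ZMod n} (hz : z ∈ dvdSubgroup c) :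
    Mxi n z ∈ dvdSubgroup c := by
  rw [mem_dvdSubgroup] at hz ⊢
  exact ⟨dvd_neg.mpr hz.2, dvd_sub hz.1 hz.2⟩

theorem Mxi_smul (c : ZMod n) (w : ZMod n × ZMod n) : Mxi n (c • w) = c • Mxi n w := by
  simp only [Mxi_apply, Prod.smul_mk, smul_eq_mul, Prod.smul_fst, Prod.smul_snd]
  ext <;> ring

-- `w.1 ^ 2 - w.1 * w.2 + w.2 ^ 2` is the determinant of the matrix with columns `w`, `Mxi n w`.
theorem exists_eq_smul_add_smul_Mxi {w : ZMod n × ZMod n}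
    (hw : IsUnit (w.1 ^ 2 - w.1 * w.2 + w.2 ^ 2)) (v : ZMod n × ZMod n) :
    ∃ a b : ZMod n, v = a • w + b • Mxi n w := by
  obtain ⟨u, hu⟩ := hw.exists_left_inv
  refine ⟨((w.1 - w.2) * v.1 + w.2 * v.2) * u, (w.1 * v.2 - w.2 * v.1) * u, ?_⟩
  simp only [Mxi_apply]
  ext
  · simp only [Prod.fst_add, Prod.smul_fst, smul_eq_mul]
    linear_combination -v.1 * hu
  · simp only [Prod.snd_add, Prod.smul_snd, smul_eq_mul]
    linear_combination -v.2 * hu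

theorem dvdSubgroup_le_of_smul_mem {S : AddSubgroup (ZMod n × ZMod n)}
    (hS : ∀ z ∈ S, Mxi n z ∈ S) {c : ZMod n} {w : ZMod n × ZMod n}
    (hw : IsUnit (w.1 ^ 2 - w.1 * w.2 + w.2 ^ 2)) (hcw : c • w ∈ S) : dvdSubgroup c ≤ S := by
  intro v hv
  obtain ⟨v, rfl⟩ := mem_dvdSubgroup_iff_exists_smul.mp hv
  obtain ⟨a, b, rfl⟩ := exists_eq_smul_add_smul_Mxi hw v
  rw [smul_add, smul_comm c a, smul_comm c b, ← Mxi_smul]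
  exact add_mem ((toZModSubmodule n S).smul_mem a hcw)
    ((toZModSubmodule n S).smul_mem b (hS _ hcw))

end Plane

section Classification

variable {p α : ℕ}

theorem isUnit_norm_of_notMem_dvdSubgroup (hp : p.Prime) (hp3 : p % 3 = 2) (hα : α ≠ 0)
    {w : ZMod (p ^ α) × ZMod (p ^ α)} (hw : w ∉ dvdSubgroup (p : ZMod (p ^ α))) :
    IsUnit (w.1 ^ 2 - w.1 * w.2 + w.2 ^ 2) := by
  have : Fact p.Prime := ⟨hp⟩
  contrapose! hw
  set π := ZMod.castHom (dvd_pow_self p hα) (ZMod p)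
  rw [ZMod.isUnit_iff_castHom_ne_zero hp hα, not_not] at hw
  have h : π w.1 ^ 2 - π w.1 * π w.2 + π w.2 ^ 2 = 0 := by
    simpa only [map_add, map_sub, map_mul, map_pow] using hw
  obtain ⟨h1, h2⟩ := ZMod.eq_zero_of_sq_sub_mul_add_sq_eq_zero hp3 h
  exact mem_dvdSubgroup.mpr ⟨(ZMod.castHom_eq_zero_iff_dvd hα _).mp h1,
    (ZMod.castHom_eq_zero_iff_dvd hα _).mp h2⟩

theorem exists_eq_dvdSubgroup_of_map_Mxi_eq (hp : p.Prime) (hp3 : p % 3 = 2)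
    {S : AddSubgroup (ZMod (p ^ α) × ZMod (p ^ α))} (hS : S.map (Mxi (p ^ α)) = S) :
    ∃ k ≤ α, S = dvdSubgroup ((p : ZMod (p ^ α)) ^ k) := by
  classical
  have hM : ∀ z ∈ S, Mxi (p ^ α) z ∈ S := fun z hz ↦ hS ▸ mem_map_of_mem _ hz
  let P k := S ≤ dvdSubgroup ((p : ZMod (p ^ α)) ^ k)
  set k := Nat.findGreatest P α
  have hP0 : P 0 := fun z _ ↦ mem_dvdSubgroup.mpr (by simp)
  have hk : P k := Nat.findGreatest_spec (Nat.zero_le α) hP0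
  have hkα : k ≤ α := Nat.findGreatest_le α
  refine ⟨k, hkα, le_antisymm hk ?_⟩
  rcases hkα.lt_or_eq with hlt | heq
  · obtain ⟨z, hzS, hz⟩ := SetLike.not_le_iff_exists.mp
      (Nat.findGreatest_is_greatest (P := P) (lt_add_one k) hlt)
    obtain ⟨w, rfl⟩ := mem_dvdSubgroup_iff_exists_smul.mp (hk hzS)
    have hw : w ∉ dvdSubgroup (p : ZMod (p ^ α)) := by
      intro hw
      obtain ⟨w', rfl⟩ := mem_dvdSubgroup_iff_exists_smul.mp hw
      exact hz (mem_dvdSubgroup_iff_exists_smul.mpr ⟨w', by rw [smul_smul, pow_succ]⟩)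
    exact dvdSubgroup_le_of_smul_mem hM
      (isUnit_norm_of_notMem_dvdSubgroup hp hp3 (by omega) hw) hzS
  · rw [heq, ← Nat.cast_pow, ZMod.natCast_self, dvdSubgroup_zero]
    exact bot_le

theorem map_Mxi_eq_and_card_eq_iff (hp : p.Prime) (hp3 : p % 3 = 2)
    (S : AddSubgroup (ZMod (p ^ α) × ZMod (p ^ α))) :
    (S.map (Mxi (p ^ α)) = S ∧ Nat.card S = p ^ α) ↔
      Even α ∧ S = dvdSubgroup ((p : ZMod (p ^ α)) ^ (α / 2)) := by
  constructor
  · rintro ⟨hS, hcard⟩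
    obtain ⟨k, hk, rfl⟩ := exists_eq_dvdSubgroup_of_map_Mxi_eq hp hp3 hS
    rw [card_dvdSubgroup, ZMod.addOrderOf_prime_pow hp hk, ← pow_mul] at hcard
    have := Nat.pow_right_injective hp.two_le hcard
    exact ⟨⟨α - k, by omega⟩, by congr; omega⟩
  · rintro ⟨⟨m, hm⟩, rfl⟩
    refine ⟨map_Mxi_eq_of_forall_mem fun z ↦ Mxi_mem_dvdSubgroup, ?_⟩
    rw [card_dvdSubgroup, ZMod.addOrderOf_prime_pow hp (by omega), ← pow_mul]
    congr 1
    omega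

end Classification

theorem count_Mxi_stable_two_mod_three_general (p α : ℕ) (hp : p.Prime) (hp3 : p % 3 = 2) :
    (Even α →
      Nat.card {S : AddSubgroup (ZMod (p ^ α) × ZMod (p ^ α)) //
          S.map (Mxi (p ^ α)) = S ∧ Nat.card S = p ^ α} = 1) ∧
    (Odd α →
      Nat.card {S : AddSubgroup (ZMod (p ^ α) × ZMod (p ^ α)) //
          S.map (Mxi (p ^ α)) = S ∧ Nat.card S = p ^ α} = 0) := by
  simp only [map_Mxi_eq_and_card_eq_iff hp hp3]
  exact ⟨fun he ↦ by simp [he], fun ho ↦ by simp [Nat.not_even_iff_odd.mpr ho]⟩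

/-- If `p ≡ 2 (mod 3)` is prime and `α ≥ 1`, the number of subgroups of
`(ℤ/p^αℤ)²` of order `p^α` stable under `(a,b) ↦ (-b, a-b)` is `1` if `α` is even
and `0` if `α` is odd. -/
theorem count_Mxi_stable_two_mod_three (p α : ℕ) (hp : p.Prime) (hp3 : p % 3 = 2)
    (hα : 1 ≤ α) :
    (Even α →
      Nat.card {S : AddSubgroup (ZMod (p ^ α) × ZMod (p ^ α)) //
          S.map (Mxi (p ^ α)) = S ∧ Nat.card S = p ^ α} = 1) ∧
    (Odd α →
      Nat.card {S : AddSubgroup (ZMod (p ^ α) × ZMod (p ^ α)) //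
          S.map (Mxi (p ^ α)) = S ∧ Nat.card S = p ^ α} = 0) :=
  count_Mxi_stable_two_mod_three_general p α hp hp3
end

section
/- Let E be an elliptic curve, H a finite subgroup of E, ξ ∈ Aut₀(E) a nontrivial automorphism fixing the origin, and q, q' ∈ E. Define G_{H,ξ,q} to be the subgroup of Aut(E) generated by the translations by elements of H together with the automorphism μ_{ξ,q}: x ↦ ξ(x) + q. Assume H is ξ-stable. Then G_{H,ξ,q} = G_{H,ξ,q'} if and only if q − q' ∈ H. -/
/-- The affine automorphism `μ_{ξ,q} : x ↦ ξ(x) + q` of (the points of) an elliptic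
curve `E`, as a permutation of `E`. -/
def affineMu {E : Type*} [AddCommGroup E] (ξ : AddAut E) (q : E) : Equiv.Perm E :=
  ξ.toEquiv.trans (Equiv.addRight q)

/-- The group `G_{H,ξ,q} = ⟨μ_{ξ,q}, H⟩` of automorphisms of `E` generated by the
translations by elements of `H` and the map `μ_{ξ,q} : x ↦ ξ(x) + q`. -/
def GHxiq {E : Type*} [AddCommGroup E] (H : AddSubgroup E) (ξ : AddAut E) (q : E) :
    Subgroup (Equiv.Perm E) :=
  Subgroup.closure ({affineMu ξ q} ∪ (fun h : E => Equiv.addRight h) '' H)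

/-!
`affineMu ψ c` is the map `x ↦ ψ x + c`; in Mathlib `AddAut E` is an additive group under
composition, so `n • ξ` is `ξ^n`. These maps compose like a semidirect product, so
`μ = μ_{ξ,q}` conjugates the translation `τ_h` to `τ_{ξ h}`, and by `ξ`-stability of `H`
every element of `G_{H,ξ,q}` is `τ_h μ^n` with `h ∈ H`, `n ∈ ℤ`. The linear part of `μ^n`
is `ξ^n`, and `μ^ℓ = 1` because `ξ^ℓ = 1` and `1 + ξ + ⋯ + ξ^(ℓ-1)` kills `q`. So if
`μ_{ξ,q'} = τ_h μ^n`, comparing linear parts gives `ξ^n = ξ`, hence `n ≡ 1 [ZMOD ℓ]` and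
`μ^n = μ`; comparing translation parts then gives `q' = q + h`.
-/

open Finset

section

variable {E : Type*} [AddCommGroup E]

lemma affineMu_apply (ξ : AddAut E) (q x : E) : affineMu ξ q x = ξ x + q := rfl

lemma affineMu_zero (h : E) : affineMu 0 h = Equiv.addRight h := rfl

lemma affineMu_zero_zero : affineMu (0 : AddAut E) 0 = 1 := by
  rw [affineMu_zero, Equiv.addRight_zero]

lemma affineMu_mul_affineMu (ξ ψ : AddAut E) (q c : E) :
    affineMu ξ q * affineMu ψ c = affineMu (ξ + ψ) (ξ c + q) :=
  Equiv.ext fun x => by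
    simp only [Equiv.Perm.mul_apply, affineMu_apply, map_add, AddAut.add_apply]
    abel

lemma affineMu_inv (ξ : AddAut E) (q : E) : (affineMu ξ q)⁻¹ = affineMu (-ξ) (-(-ξ) q) :=
  inv_eq_of_mul_eq_one_left <| by
    rw [affineMu_mul_affineMu, neg_add_cancel, add_neg_cancel, affineMu_zero_zero]

lemma affineMu_inj {ξ ψ : AddAut E} {q c : E} :
    affineMu ξ q = affineMu ψ c ↔ ξ = ψ ∧ q = c := by
  refine ⟨fun h => ?_, fun ⟨hξ, hq⟩ => hξ ▸ hq ▸ rfl⟩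
  have hq : q = c := by simpa [affineMu_apply] using DFunLike.congr_fun h 0
  subst hq
  exact ⟨AddEquiv.ext fun x => add_right_cancel (DFunLike.congr_fun h x), rfl⟩

lemma addRight_mul_affineMu (h : E) (ξ : AddAut E) (q : E) :
    Equiv.addRight h * affineMu ξ q = affineMu ξ (q + h) := by
  rw [← affineMu_zero, affineMu_mul_affineMu, zero_add, AddAut.zero_apply, add_comm]

lemma affineMu_mul_addRight (ξ : AddAut E) (q h : E) :
    affineMu ξ q * Equiv.addRight h = Equiv.addRight (ξ h) * affineMu ξ q := by
  rw [← affineMu_zero, affineMu_mul_affineMu, addRight_mul_affineMu, add_zero, add_comm]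

lemma affineMu_pow (ξ : AddAut E) (q : E) (k : ℕ) :
    affineMu ξ q ^ k = affineMu (k • ξ) (∑ i ∈ range k, (i • ξ) q) := by
  induction k with
  | zero => simp [affineMu_zero_zero]
  | succ k ih =>
    rw [pow_succ', ih, affineMu_mul_affineMu, succ_nsmul', sum_range_succ', map_sum]
    simp only [succ_nsmul', AddAut.add_apply, zero_smul, AddAut.zero_apply]

lemma affineMu_pow_addOrderOf {ξ : AddAut E} {q : E}
    (hcyc : ∑ i ∈ range (addOrderOf ξ), (i • ξ) q = 0) :
    affineMu ξ q ^ addOrderOf ξ = 1 := by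
  rw [affineMu_pow, addOrderOf_nsmul_eq_zero, hcyc, affineMu_zero_zero]

lemma exists_affineMu_zpow (ξ : AddAut E) (q : E) (n : ℤ) :
    ∃ c, affineMu ξ q ^ n = affineMu (n • ξ) c := by
  induction n using Int.induction_on with
  | zero => exact ⟨0, by rw [zpow_zero, zero_zsmul, affineMu_zero_zero]⟩
  | succ n ih =>
    obtain ⟨c, hc⟩ := ih
    exact ⟨_, by rw [zpow_add_one, hc, affineMu_mul_affineMu, add_one_zsmul]⟩
  | pred n ih =>
    obtain ⟨c, hc⟩ := ih
    exact ⟨_, by rw [zpow_sub_one, hc, affineMu_inv, affineMu_mul_affineMu, sub_one_zsmul]⟩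

lemma affineMu_zpow_mul_addRight (ξ : AddAut E) (q h : E) (n : ℤ) :
    affineMu ξ q ^ n * Equiv.addRight h = Equiv.addRight ((n • ξ) h) * affineMu ξ q ^ n := by
  obtain ⟨c, hc⟩ := exists_affineMu_zpow ξ q n
  rw [hc, affineMu_mul_addRight]

lemma affineMu_zpow_eq_self {ξ : AddAut E} {q : E} {n : ℤ}
    (hcyc : ∑ i ∈ range (addOrderOf ξ), (i • ξ) q = 0) (hn : n • ξ = ξ) :
    affineMu ξ q ^ n = affineMu ξ q := by
  have hdvd : orderOf (affineMu ξ q) ∣ addOrderOf ξ :=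
    orderOf_dvd_of_pow_eq_one (affineMu_pow_addOrderOf hcyc)
  have hn1 : n ≡ 1 [ZMOD addOrderOf ξ] :=
    zsmul_eq_zsmul_iff_modEq.1 (hn.trans (one_zsmul ξ).symm)
  calc affineMu ξ q ^ n = affineMu ξ q ^ (1 : ℤ) :=
        zpow_eq_zpow_iff_modEq.2 (hn1.of_dvd (Int.natCast_dvd_natCast.2 hdvd))
    _ = affineMu ξ q := zpow_one _

lemma zsmul_apply_mem_of_map_eq {H : AddSubgroup E} {ξ : AddAut E}
    (hH : H.map ξ.toAddMonoidHom = H) (n : ℤ) {h : E} (hh : h ∈ H) : (n • ξ) h ∈ H := by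
  have hξ : ∀ h ∈ H, ξ h ∈ H := fun h hh => hH ▸ AddSubgroup.mem_map_of_mem _ hh
  have hξ_symm : ∀ h ∈ H, ξ.symm h ∈ H := fun h hh => by
    rw [← hH] at hh
    obtain ⟨h', hh', rfl⟩ := hh
    simpa using hh'
  induction n using Int.induction_on generalizing h with
  | zero => simpa using hh
  | succ n ih =>
    rw [add_one_zsmul, AddAut.add_apply]
    exact ih (hξ h hh)
  | pred n ih =>
    rw [sub_one_zsmul, AddAut.add_apply, AddAut.neg_apply]
    exact ih (hξ_symm h hh)

lemma affineMu_mem_GHxiq (H : AddSubgroup E) (ξ : AddAut E) (q : E) :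
    affineMu ξ q ∈ GHxiq H ξ q :=
  Subgroup.subset_closure (Or.inl rfl)

lemma addRight_mem_GHxiq {H : AddSubgroup E} (ξ : AddAut E) (q : E) {h : E} (hh : h ∈ H) :
    Equiv.addRight h ∈ GHxiq H ξ q :=
  Subgroup.subset_closure (Or.inr ⟨h, hh, rfl⟩)

lemma mem_GHxiq_iff {H : AddSubgroup E} {ξ : AddAut E} {q : E}
    (hH : H.map ξ.toAddMonoidHom = H) {f : Equiv.Perm E} :
    f ∈ GHxiq H ξ q ↔ ∃ h ∈ H, ∃ n : ℤ, f = Equiv.addRight h * affineMu ξ q ^ n := by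
  refine ⟨fun hf => ?_, ?_⟩
  · unfold GHxiq at hf
    induction hf using Subgroup.closure_induction with
    | mem f hf =>
      rcases hf with rfl | ⟨h, hh, rfl⟩
      · exact ⟨0, H.zero_mem, 1, by simp⟩
      · exact ⟨h, hh, 0, by simp⟩
    | one => exact ⟨0, H.zero_mem, 0, by simp⟩
    | mul f g _ _ hf hg =>
      obtain ⟨a, ha, n, rfl⟩ := hf
      obtain ⟨b, hb, m, rfl⟩ := hg
      refine ⟨(n • ξ) b + a, H.add_mem (zsmul_apply_mem_of_map_eq hH n hb) ha, n + m, ?_⟩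
      rw [Equiv.addRight_add, zpow_add, mul_assoc, ← mul_assoc (_ ^ n),
        affineMu_zpow_mul_addRight]
      group
    | inv f _ hf =>
      obtain ⟨a, ha, n, rfl⟩ := hf
      refine ⟨((-n) • ξ) (-a), zsmul_apply_mem_of_map_eq hH (-n) (H.neg_mem ha), -n, ?_⟩
      rw [mul_inv_rev, Equiv.neg_addRight, ← zpow_neg, affineMu_zpow_mul_addRight]
  · rintro ⟨h, hh, n, rfl⟩
    exact mul_mem (addRight_mem_GHxiq ξ q hh) (zpow_mem (affineMu_mem_GHxiq H ξ q) n)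

lemma GHxiq_le_of_sub_mem {H : AddSubgroup E} {ξ : AddAut E} {q q' : E} (h : q - q' ∈ H) :
    GHxiq H ξ q ≤ GHxiq H ξ q' := by
  rw [GHxiq, Subgroup.closure_le]
  rintro f (rfl | ⟨h₀, hh₀, rfl⟩)
  · rw [show q = q' + (q - q') by abel, ← addRight_mul_affineMu]
    exact mul_mem (addRight_mem_GHxiq ξ q' h) (affineMu_mem_GHxiq H ξ q')
  · exact addRight_mem_GHxiq ξ q' hh₀

end

theorem GHxiq_eq_iff_general {E : Type*} [AddCommGroup E] (ξ : AddAut E)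
    (ℓ : ℕ) (hord : addOrderOf ξ = ℓ)
    (hcyc : ∀ x : E, ∑ i ∈ Finset.range ℓ, (i • ξ) x = 0)
    (H : AddSubgroup E) (hH : H.map ξ.toAddMonoidHom = H) (q q' : E) :
    GHxiq H ξ q = GHxiq H ξ q' ↔ q - q' ∈ H := by
  subst hord
  refine ⟨fun heq => ?_, fun h => le_antisymm (GHxiq_le_of_sub_mem h)
    (GHxiq_le_of_sub_mem (H.sub_mem_comm_iff.1 h))⟩
  obtain ⟨h, hh, n, hμ⟩ := (mem_GHxiq_iff hH).1 (heq ▸ affineMu_mem_GHxiq H ξ q')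
  obtain ⟨c, hc⟩ := exists_affineMu_zpow ξ q n
  rw [hc, addRight_mul_affineMu, affineMu_inj] at hμ
  obtain ⟨hn, rfl⟩ := hμ
  rw [affineMu_zpow_eq_self (hcyc q) hn.symm, ← hn, affineMu_inj] at hc
  obtain ⟨-, rfl⟩ := hc
  simpa using H.neg_mem hh

/-- Let `E` be an elliptic curve, `H ≤ E` a finite subgroup, `ξ` a nontrivial
automorphism of `E` fixing the origin of finite order `ℓ ≥ 2` (on an elliptic curve
`ξ` satisfies `1 + ξ + ⋯ + ξ^(ℓ-1) = 0`), `H` `ξ`-stable, and `q, q' ∈ E`. Then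
`G_{H,ξ,q} = G_{H,ξ,q'}` if and only if `q - q' ∈ H`. -/
theorem GHxiq_eq_iff {E : Type*} [AddCommGroup E] (ξ : AddAut E) (hξ : ξ ≠ 0)
    (ℓ : ℕ) (hℓ : 2 ≤ ℓ) (hord : addOrderOf ξ = ℓ)
    (hcyc : ∀ x : E, ∑ i ∈ Finset.range ℓ, (i • ξ) x = 0)
    (H : AddSubgroup E) [Finite H] (hH : H.map ξ.toAddMonoidHom = H) (q q' : E) :
    GHxiq H ξ q = GHxiq H ξ q' ↔ q - q' ∈ H :=
  GHxiq_eq_iff_general ξ ℓ hord hcyc H hH q q'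
end

section
/- Let E be an elliptic curve, ξ ∈ Aut₀(E) of order ℓ ∈ {2,3,4,6}, H ≤ E a ξ-stable finite subgroup of order m, and q ∈ E. Let G = G_{H,ξ,q} = ⟨μ_{ξ,q}, H⟩ where μ_{ξ,q}(x) = ξ(x)+q. Then the sum in E of the orbit {g(0) : g ∈ G} (with multiplicity, over all g ∈ G) equals ε_{ξ,m}(q), where ε_{ξ,m}(x) = m·x if ℓ = 2; m(2+ξ)(x) if ℓ = 3; 2m(1+ξ)(x) if ℓ = 4; and 6m·ξ(x) if ℓ = 6. -/
/-!
Write `S = ∑_{h ∈ H} h`. Since each `ξ^i` (written `i • ξ` in the additive group `AddAut E`) is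
additive, the sum over `G` splits as
`(∑_{i<ℓ} ξ^i) S + m • ∑_{i<ℓ} ∑_{j<i} ξ^j q`. The relation satisfied by the primitive `ℓ`th
root of unity `ξ` kills `1 + ξ + ⋯ + ξ^(ℓ-1)`, and the same relation reduces the double sum to
`ε_{ξ,1}(q)`.
-/

open Finset

namespace AddAut

variable {E : Type*} [AddCommGroup E] (ξ : AddAut E)

theorem succ_nsmul_apply (n : ℕ) (x : E) : ((n + 1) • ξ) x = ξ ((n • ξ) x) := by
  rw [succ_nsmul', add_apply]

theorem sum_range_sum_nsmul_apply_add_eq_card_nsmul {ι : Type*} [Fintype ι] {ℓ : ℕ}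
    (hvan : ∀ x, ∑ i ∈ range ℓ, (i • ξ) x = 0) (v : ι → E) (c : ℕ → E) :
    ∑ i ∈ range ℓ, ∑ h, ((i • ξ) (v h) + c i) = Nat.card ι • ∑ i ∈ range ℓ, c i := by
  simp only [sum_add_distrib, ← map_sum, hvan, sum_const, card_univ, zero_add, smul_sum,
    Nat.card_eq_fintype_card]

theorem apply_apply_eq_neg (h : ∀ x, (2 • ξ) x + x = 0) (x : E) : ξ (ξ x) = -x :=
  eq_neg_of_add_eq_zero_left (h x)

theorem apply_apply_eq_apply_sub (h : ∀ x, (2 • ξ) x - ξ x + x = 0) (x : E) :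
    ξ (ξ x) = ξ x - x := by
  rw [← sub_eq_zero, ← h x, two_nsmul, add_apply]
  abel

theorem sum_range_two_nsmul_apply_eq_zero (h : ∀ x, ξ x = -x) (x : E) :
    ∑ i ∈ range 2, (i • ξ) x = 0 := by
  simp [sum_range_succ, h]

theorem sum_range_three_nsmul_apply_eq_zero (h : ∀ x, (2 • ξ) x + ξ x + x = 0) (x : E) :
    ∑ i ∈ range 3, (i • ξ) x = 0 := by
  rw [← h x]
  simp only [sum_range_succ, sum_range_zero, zero_nsmul, one_nsmul, zero_apply]
  abel

theorem sum_range_four_nsmul_apply_eq_zero (h : ∀ x, (2 • ξ) x + x = 0) (x : E) :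
    ∑ i ∈ range 4, (i • ξ) x = 0 := by
  simp only [sum_range_succ, sum_range_zero, succ_nsmul_apply, zero_nsmul, zero_apply,
    apply_apply_eq_neg ξ h, map_neg]
  abel

theorem sum_range_six_nsmul_apply_eq_zero (h : ∀ x, (2 • ξ) x - ξ x + x = 0) (x : E) :
    ∑ i ∈ range 6, (i • ξ) x = 0 := by
  simp only [sum_range_succ, sum_range_zero, succ_nsmul_apply, zero_nsmul, zero_apply,
    apply_apply_eq_apply_sub ξ h, map_sub]
  abel

theorem sum_range_two_sum_range_nsmul_apply (q : E) :
    ∑ i ∈ range 2, ∑ j ∈ range i, (j • ξ) q = q := by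
  simp [sum_range_succ]

theorem sum_range_three_sum_range_nsmul_apply (q : E) :
    ∑ i ∈ range 3, ∑ j ∈ range i, (j • ξ) q = 2 • q + ξ q := by
  simp only [sum_range_succ, sum_range_zero, zero_nsmul, one_nsmul, zero_apply]
  abel

theorem sum_range_four_sum_range_nsmul_apply (h : ∀ x, (2 • ξ) x + x = 0) (q : E) :
    ∑ i ∈ range 4, ∑ j ∈ range i, (j • ξ) q = 2 • (q + ξ q) := by
  simp only [sum_range_succ, sum_range_zero, succ_nsmul_apply, zero_nsmul, zero_apply,
    apply_apply_eq_neg ξ h]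
  abel

theorem sum_range_six_sum_range_nsmul_apply (h : ∀ x, (2 • ξ) x - ξ x + x = 0) (q : E) :
    ∑ i ∈ range 6, ∑ j ∈ range i, (j • ξ) q = 6 • ξ q := by
  simp only [sum_range_succ, sum_range_zero, succ_nsmul_apply, zero_nsmul, zero_apply,
    apply_apply_eq_apply_sub ξ h, map_sub]
  abel

end AddAut

open AddAut

theorem sum_orbit_zero_eq_epsilon_general {E : Type*} [AddCommGroup E] (ξ : AddAut E)
    (ℓ m : ℕ)
    (H : AddSubgroup E) [Fintype H] (hm : Nat.card H = m)
    (q : E) :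
    (ℓ = 2 → (∀ x : E, ξ x = -x) →
      ∑ i ∈ Finset.range ℓ, ∑ h : H,
          ((i • ξ) (h : E) + ∑ j ∈ Finset.range i, (j • ξ) q) = m • q) ∧
    (ℓ = 3 → (∀ x : E, (2 • ξ) x + ξ x + x = 0) →
      ∑ i ∈ Finset.range ℓ, ∑ h : H,
          ((i • ξ) (h : E) + ∑ j ∈ Finset.range i, (j • ξ) q) =
        m • (2 • q + ξ q)) ∧
    (ℓ = 4 → (∀ x : E, (2 • ξ) x + x = 0) →
      ∑ i ∈ Finset.range ℓ, ∑ h : H,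
          ((i • ξ) (h : E) + ∑ j ∈ Finset.range i, (j • ξ) q) =
        (2 * m) • (q + ξ q)) ∧
    (ℓ = 6 → (∀ x : E, (2 • ξ) x - ξ x + x = 0) →
      ∑ i ∈ Finset.range ℓ, ∑ h : H,
          ((i • ξ) (h : E) + ∑ j ∈ Finset.range i, (j • ξ) q) =
        (6 * m) • ξ q) := by
  subst hm
  refine ⟨fun hℓ h => ?_, fun hℓ h => ?_, fun hℓ h => ?_, fun hℓ h => ?_⟩ <;> subst hℓ
  · rw [sum_range_sum_nsmul_apply_add_eq_card_nsmul ξ (sum_range_two_nsmul_apply_eq_zero ξ h),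
      sum_range_two_sum_range_nsmul_apply]
  · rw [sum_range_sum_nsmul_apply_add_eq_card_nsmul ξ (sum_range_three_nsmul_apply_eq_zero ξ h),
      sum_range_three_sum_range_nsmul_apply]
  · rw [sum_range_sum_nsmul_apply_add_eq_card_nsmul ξ (sum_range_four_nsmul_apply_eq_zero ξ h),
      sum_range_four_sum_range_nsmul_apply ξ h, mul_comm, mul_smul]
  · rw [sum_range_sum_nsmul_apply_add_eq_card_nsmul ξ (sum_range_six_nsmul_apply_eq_zero ξ h),
      sum_range_six_sum_range_nsmul_apply ξ h, mul_comm, mul_smul]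

/-- Let `E` be an elliptic curve, `ξ ∈ Aut₀(E)` of order `ℓ ∈ {2,3,4,6}` (acting as
a primitive `ℓ`th root of unity, hence satisfying the corresponding cyclotomic
relation), `H ≤ E` a `ξ`-stable finite subgroup of order `m`, `q ∈ E`, and
`G = G_{H,ξ,q} = ⟨μ_{ξ,q}, H⟩` where `μ_{ξ,q}(x) = ξ(x) + q`. Since `g(0)` for
`g = μ_{ξ,q}^i ∘ t_h` equals `ξ^i h + (1 + ξ + ⋯ + ξ^(i-1)) q`, the sum over `G` of
`g(0)` is `∑_{i<ℓ} ∑_{h∈H} (ξ^i h + ∑_{j<i} ξ^j q)`, and it equals `ε_{ξ,m}(q)`,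
namely `m•q` if `ℓ = 2`; `m•(2•q + ξq)` if `ℓ = 3`; `(2m)•(q + ξq)` if `ℓ = 4`; and
`(6m)•(ξq)` if `ℓ = 6`. -/
theorem sum_orbit_zero_eq_epsilon {E : Type*} [AddCommGroup E] (ξ : AddAut E)
    (ℓ m : ℕ) (hℓ : ℓ ∈ ({2, 3, 4, 6} : Set ℕ)) (hord : addOrderOf ξ = ℓ)
    (H : AddSubgroup E) [Fintype H] (hm : Nat.card H = m)
    (hH : H.map ξ.toAddMonoidHom = H) (q : E) :
    (ℓ = 2 → (∀ x : E, ξ x = -x) →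
      ∑ i ∈ Finset.range ℓ, ∑ h : H,
          ((i • ξ) (h : E) + ∑ j ∈ Finset.range i, (j • ξ) q) = m • q) ∧
    (ℓ = 3 → (∀ x : E, (2 • ξ) x + ξ x + x = 0) →
      ∑ i ∈ Finset.range ℓ, ∑ h : H,
          ((i • ξ) (h : E) + ∑ j ∈ Finset.range i, (j • ξ) q) =
        m • (2 • q + ξ q)) ∧
    (ℓ = 4 → (∀ x : E, (2 • ξ) x + x = 0) →
      ∑ i ∈ Finset.range ℓ, ∑ h : H,
          ((i • ξ) (h : E) + ∑ j ∈ Finset.range i, (j • ξ) q) =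
        (2 * m) • (q + ξ q)) ∧
    (ℓ = 6 → (∀ x : E, (2 • ξ) x - ξ x + x = 0) →
      ∑ i ∈ Finset.range ℓ, ∑ h : H,
          ((i • ξ) (h : E) + ∑ j ∈ Finset.range i, (j • ξ) q) =
        (6 * m) • ξ q) :=
  sum_orbit_zero_eq_epsilon_general ξ ℓ m H hm q
end
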